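/- arXiv:1702.08859 — 4 statements merged into one kernel-verified Lean document; each statement's English description precedes it below -/
import Mathlib

section
/- Let φ : ℝ → ℝ be smooth with 0 ≤ φ(t) ≤ 1 for all t, φ'(t) ≤ 0 for all t, |φ'(t)| ≤ 1 for all t, and φ(t) = 1 for all t ≤ 1. Define c(t) = (e^t + φ(t)e^{−t})/2. Then for every t > 0 one has 0 ≤ c'(t)² ≤ c(t)²; equivalently the quantity −c'(t)²/c(t)² lies in the interval [−1, 0]. -/
open Real

noncomputable def cuspWarping (φ : ℝ → ℝ) (t : ℝ) : ℝ := (exp t + φ t * exp (-t)) / 2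

theorem hasDerivAt_cuspWarping {φ : ℝ → ℝ} {φ' t : ℝ} (h : HasDerivAt φ φ' t) :
    HasDerivAt (cuspWarping φ) ((exp t + (φ' - φ t) * exp (-t)) / 2) t := by
  exact (((hasDerivAt_exp t).add (h.mul (hasDerivAt_neg t).exp)).div_const 2).congr_deriv
    (by ring)

/-- The upper bound is `φ' ≤ 2φ`; the lower bound is `-φ' ≤ 2e^{2t}`, which holds as soon as
`φ' ≥ -1` and `t ≥ 0`. -/
theorem abs_deriv_cuspWarping_le {φ : ℝ → ℝ} {φ' t : ℝ} (h : HasDerivAt φ φ' t)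
    (hφ : 0 ≤ φ t) (hφ'_nonpos : φ' ≤ 0) (hφ'_ge : -1 ≤ φ') (ht : 0 ≤ t) :
    |deriv (cuspWarping φ) t| ≤ cuspWarping φ t := by
  rw [(hasDerivAt_cuspWarping h).deriv, cuspWarping, abs_le]
  have hexp_neg_pos : 0 < exp (-t) := exp_pos _
  have hexp_neg_le : exp (-t) ≤ exp t := exp_le_exp.2 (by linarith)
  constructor <;> nlinarith

theorem neg_sq_div_sq_mem_Icc {x y : ℝ} (h : x ^ 2 ≤ y ^ 2) :
    -(x ^ 2) / y ^ 2 ∈ Set.Icc (-1 : ℝ) 0 := by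
  rw [neg_div]
  exact ⟨neg_le_neg (div_le_one_of_le₀ h (sq_nonneg _)),
    neg_nonpos.2 (div_nonneg (sq_nonneg _) (sq_nonneg _))⟩

theorem stmt_1_general (φ : ℝ → ℝ) (hφ : ContDiff ℝ (⊤ : ℕ∞) φ)
    (hφ01 : ∀ t, 0 ≤ φ t ∧ φ t ≤ 1)
    (hφ'le : ∀ t, deriv φ t ≤ 0)
    (hφ'abs : ∀ t, |deriv φ t| ≤ 1)
    (c : ℝ → ℝ)
    (hc : ∀ t, c t = (Real.exp t + φ t * Real.exp (-t)) / 2) :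
    ∀ t > (0 : ℝ), (0 ≤ (deriv c t) ^ 2 ∧ (deriv c t) ^ 2 ≤ (c t) ^ 2) ∧
      -((deriv c t) ^ 2) / (c t) ^ 2 ∈ Set.Icc (-1 : ℝ) 0 := by
  intro t ht
  obtain rfl : c = cuspWarping φ := funext hc
  have hle : |deriv (cuspWarping φ) t| ≤ cuspWarping φ t :=
    abs_deriv_cuspWarping_le ((hφ.differentiable (by simp)) t).hasDerivAt (hφ01 t).1
      (hφ'le t) (neg_le_of_abs_le (hφ'abs t)) ht.le
  have hsq := sq_le_sq' (abs_le.1 hle).1 (abs_le.1 hle).2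
  exact ⟨⟨sq_nonneg _, hsq⟩, neg_sq_div_sq_mem_Icc hsq⟩

/-- With a smooth nonincreasing cutoff `φ` taking values in `[0,1]`, with `|φ'| ≤ 1` and
`φ ≡ 1` on `(-∞, 1]`, the warping function `c(t) = (e^t + φ(t)e^{-t})/2` satisfies
`0 ≤ c'(t)² ≤ c(t)²` for all `t > 0`; equivalently `-c'(t)²/c(t)² ∈ [-1, 0]`. -/
theorem stmt_1 (φ : ℝ → ℝ) (hφ : ContDiff ℝ (⊤ : ℕ∞) φ)
    (hφ01 : ∀ t, 0 ≤ φ t ∧ φ t ≤ 1)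
    (hφ'le : ∀ t, deriv φ t ≤ 0)
    (hφ'abs : ∀ t, |deriv φ t| ≤ 1)
    (hφ1 : ∀ t ≤ (1 : ℝ), φ t = 1)
    (c : ℝ → ℝ)
    (hc : ∀ t, c t = (Real.exp t + φ t * Real.exp (-t)) / 2) :
    ∀ t > (0 : ℝ), (0 ≤ (deriv c t) ^ 2 ∧ (deriv c t) ^ 2 ≤ (c t) ^ 2) ∧
      -((deriv c t) ^ 2) / (c t) ^ 2 ∈ Set.Icc (-1 : ℝ) 0 :=
  stmt_1_general φ hφ hφ01 hφ'le hφ'abs c hc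
end

section
/- Let φ : ℝ → ℝ be smooth with 0 ≤ φ(t) ≤ 1 for all t, φ'(t) ≤ 0 for all t, |φ'(t)| ≤ 1 for all t, and φ(t) = 1 for all t ≤ 1. Define c(t) = (e^t + φ(t)e^{−t})/2 and s(t) = (e^t − φ(t)e^{−t})/2. Then for every t > 0 one has 0 ≤ s'(t)c'(t) ≤ s(t)c(t); equivalently the quantity −s'(t)c'(t)/(s(t)c(t)) lies in the interval [−1, 0]. -/
/-!
Write `a = e^t`, `b₀ = φ(t)e^{-t}` and `b = (φ(t) - φ'(t))e^{-t}`. Then `s c = (a² - b₀²)/4`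
and `s' c' = (a + b)(a - b)/4 = (a² - b²)/4`, so everything follows from `0 ≤ b₀ ≤ b ≤ a`.
Only `b ≤ a` needs thought: for `t < 1` the cutoff is constant, so `b = φ(t)e^{-t} ≤ e^{-t} < e^t`;
for `t ≥ 1` we have `b ≤ 2e^{-t} ≤ e^t` because `e^{2t} ≥ 2`.
-/

open Real Set

lemma deriv_eq_zero_of_forall_le_eq {f : ℝ → ℝ} {a b t : ℝ} (hf : ∀ u ≤ a, f u = b)
    (ht : t < a) : deriv f t = 0 := by
  have hconst : f =ᶠ[nhds t] fun _ => b :=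
    Filter.eventuallyEq_of_mem (Iio_mem_nhds ht) fun u hu => hf u (le_of_lt hu)
  rw [hconst.deriv_eq, deriv_const]

lemma neg_div_mem_Icc_neg_one_zero {x y : ℝ} (hx : 0 ≤ x) (hxy : x ≤ y) :
    -x / y ∈ Icc (-1 : ℝ) 0 := by
  have hy : 0 ≤ y := hx.trans hxy
  rw [neg_div]
  exact ⟨neg_le_neg (div_le_one_of_le₀ hxy hy), neg_nonpos.mpr (div_nonneg hx hy)⟩

section Warping

variable {φ : ℝ → ℝ} {t : ℝ}

lemma hasDerivAt_mul_exp_neg (hφ : DifferentiableAt ℝ φ t) :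
    HasDerivAt (fun u => φ u * exp (-u)) (-((φ t - deriv φ t) * exp (-t))) t := by
  have hexp : HasDerivAt (fun u => exp (-u)) (-exp (-t)) t := by
    simpa using (hasDerivAt_neg t).exp
  exact (hφ.hasDerivAt.mul hexp).congr_deriv (by ring)

lemma hasDerivAt_exp_add_mul_exp_neg (hφ : DifferentiableAt ℝ φ t) :
    HasDerivAt (fun u => (exp u + φ u * exp (-u)) / 2)
      ((exp t - (φ t - deriv φ t) * exp (-t)) / 2) t :=
  ((hasDerivAt_exp t).add (hasDerivAt_mul_exp_neg hφ)).div_const 2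

lemma hasDerivAt_exp_sub_mul_exp_neg (hφ : DifferentiableAt ℝ φ t) :
    HasDerivAt (fun u => (exp u - φ u * exp (-u)) / 2)
      ((exp t + (φ t - deriv φ t) * exp (-t)) / 2) t := by
  exact (((hasDerivAt_exp t).sub (hasDerivAt_mul_exp_neg hφ)).div_const 2).congr_deriv
    (by ring)

lemma sub_deriv_mul_exp_neg_le_exp (ht : 0 < t) (hφ1 : φ t ≤ 1) (hφ' : -1 ≤ deriv φ t)
    (hflat : t < 1 → deriv φ t = 0) :
    (φ t - deriv φ t) * exp (-t) ≤ exp t := by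
  have hexp_neg : 0 < exp (-t) := exp_pos _
  rcases lt_or_ge t 1 with hlt | hge
  · calc (φ t - deriv φ t) * exp (-t) = φ t * exp (-t) := by rw [hflat hlt, sub_zero]
      _ ≤ 1 * exp (-t) := by gcongr
      _ = exp (-t) := one_mul _
      _ ≤ exp t := exp_le_exp.mpr (by linarith)
  · have htwo : 2 ≤ exp (2 * t) := by linarith [add_one_le_exp (2 * t)]
    calc (φ t - deriv φ t) * exp (-t) ≤ 2 * exp (-t) := by gcongr; linarith
      _ ≤ exp (2 * t) * exp (-t) := by gcongr
      _ = exp t := by rw [← exp_add]; ring_nf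

end Warping

/-- With a smooth nonincreasing cutoff `φ` taking values in `[0,1]`, with `|φ'| ≤ 1` and
`φ ≡ 1` on `(-∞, 1]`, the warping functions `c(t) = (e^t + φ(t)e^{-t})/2` and
`s(t) = (e^t - φ(t)e^{-t})/2` satisfy `0 ≤ s'(t)c'(t) ≤ s(t)c(t)` for all `t > 0`;
equivalently `-s'(t)c'(t)/(s(t)c(t)) ∈ [-1, 0]`. -/
theorem stmt_2 (φ : ℝ → ℝ) (hφ : ContDiff ℝ (⊤ : ℕ∞) φ)
    (hφ01 : ∀ t, 0 ≤ φ t ∧ φ t ≤ 1)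
    (hφ'le : ∀ t, deriv φ t ≤ 0)
    (hφ'abs : ∀ t, |deriv φ t| ≤ 1)
    (hφ1 : ∀ t ≤ (1 : ℝ), φ t = 1)
    (c s : ℝ → ℝ)
    (hc : ∀ t, c t = (Real.exp t + φ t * Real.exp (-t)) / 2)
    (hs : ∀ t, s t = (Real.exp t - φ t * Real.exp (-t)) / 2) :
    ∀ t > (0 : ℝ), (0 ≤ deriv s t * deriv c t ∧ deriv s t * deriv c t ≤ s t * c t) ∧
      -(deriv s t * deriv c t) / (s t * c t) ∈ Set.Icc (-1 : ℝ) 0 := by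
  intro t ht
  have hφt : DifferentiableAt ℝ φ t := hφ.differentiable (by simp) t
  have hc' : deriv c t = (exp t - (φ t - deriv φ t) * exp (-t)) / 2 := by
    rw [funext hc]; exact (hasDerivAt_exp_add_mul_exp_neg hφt).deriv
  have hs' : deriv s t = (exp t + (φ t - deriv φ t) * exp (-t)) / 2 := by
    rw [funext hs]; exact (hasDerivAt_exp_sub_mul_exp_neg hφt).deriv
  have hb₀ : 0 ≤ φ t * exp (-t) := mul_nonneg (hφ01 t).1 (exp_pos _).le
  have hb₀b : φ t * exp (-t) ≤ (φ t - deriv φ t) * exp (-t) := by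
    gcongr; linarith [hφ'le t]
  have hba : (φ t - deriv φ t) * exp (-t) ≤ exp t :=
    sub_deriv_mul_exp_neg_le_exp ht (hφ01 t).2 (abs_le.mp (hφ'abs t)).1
      fun h => deriv_eq_zero_of_forall_le_eq hφ1 h
  have hprod : 0 ≤ deriv s t * deriv c t ∧ deriv s t * deriv c t ≤ s t * c t := by
    rw [hs', hc', hs, hc]
    constructor <;> nlinarith
  exact ⟨hprod, neg_div_mem_Icc_neg_one_zero hprod.1 hprod.2⟩
end

section
/- Let 0 < ε ≤ 1 and let φ : ℝ → ℝ be smooth with 0 ≤ φ(t) ≤ 1 for all t, φ'(t) ≤ 0 for all t, |φ'(t)| ≤ ε and |φ''(t)| ≤ ε for all t, and φ(t) = 1 for all t ≤ 1. Define s(t) = (e^t − φ(t)e^{−t})/2. Then for every t > 0 one has 0 < s''(t) ≤ (1 + ε)s(t); equivalently the quantity −s''(t)/s(t) lies in the interval [−1−ε, 0). -/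
/-!
Since `(g e^{-t})'' = (g'' - 2g' + g) e^{-t}`, the warping function satisfies
`2 s'' = e^t - (φ'' - 2φ' + φ) e^{-t}`. Where `φ ≡ 1` this is `s'' = s = sinh t > 0`.
For `t ≥ 1` the coefficient `φ'' - 2φ' + φ` is at most `1 + 3ε ≤ 4` while
`e^t > 4 e^{-t}`, which gives `s'' > 0`; the upper bound reduces to
`ε (e^t - 2 e^{-t}) ≥ 0` using `φ' ≤ 0`.
-/

open Real Filter Topology

noncomputable def warp (g : ℝ → ℝ) (t : ℝ) : ℝ := (exp t - g t * exp (-t)) / 2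

theorem hasDerivAt_warp {g : ℝ → ℝ} {g' t : ℝ} (hg : HasDerivAt g g' t) :
    HasDerivAt (warp g) ((exp t - (g' - g t) * exp (-t)) / 2) t := by
  have hexp : HasDerivAt (fun t => exp (-t)) (-exp (-t)) t := by
    simpa using (hasDerivAt_neg t).exp
  exact (((hasDerivAt_exp t).sub (hg.mul hexp)).div_const 2).congr_deriv (by ring)

theorem deriv_warp {g : ℝ → ℝ} (hg : Differentiable ℝ g) : deriv (warp g) = warp (deriv g - g) :=
  funext fun t => (hasDerivAt_warp (hg t).hasDerivAt).deriv

theorem deriv_deriv_warp {φ : ℝ → ℝ} (h₁ : Differentiable ℝ φ) (h₂ : Differentiable ℝ (deriv φ)) :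
    deriv (deriv (warp φ)) = warp fun t => deriv (deriv φ) t - 2 * deriv φ t + φ t := by
  rw [deriv_warp h₁, deriv_warp (h₂.sub h₁)]
  funext t
  simp only [warp, Pi.sub_apply, deriv_sub (h₂ t) (h₁ t)]
  ring

theorem warp_eventuallyEq_sinh {φ : ℝ → ℝ} {t : ℝ} (h : φ =ᶠ[𝓝 t] fun _ => 1) :
    warp φ =ᶠ[𝓝 t] sinh :=
  h.mono fun x hx => by simp [warp, hx, sinh_eq]

theorem deriv_deriv_warp_of_eventuallyEq_one {φ : ℝ → ℝ} {t : ℝ} (h : φ =ᶠ[𝓝 t] fun _ => 1) :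
    deriv (deriv (warp φ)) t = sinh t := by
  rw [(warp_eventuallyEq_sinh h).deriv.deriv.eq_of_nhds, Real.deriv_sinh, Real.deriv_cosh]

theorem four_mul_exp_neg_lt_exp {t : ℝ} (ht : 1 ≤ t) : 4 * exp (-t) < exp t := by
  have h2 : 2 < exp t := by linarith [exp_one_gt_d9, exp_le_exp.mpr ht]
  rw [exp_neg, ← div_eq_mul_inv, div_lt_iff₀ (exp_pos t)]
  nlinarith

theorem warp_bounds_of_one_le {t a b c ε : ℝ} (ht : 1 ≤ t) (ha : a ≤ 1)
    (hb₀ : -ε ≤ b) (hb₁ : b ≤ 0) (hc : |c| ≤ ε) (hε : ε ≤ 1) :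
    0 < warp (fun _ => c - 2 * b + a) t ∧
      warp (fun _ => c - 2 * b + a) t ≤ (1 + ε) * warp (fun _ => a) t := by
  have hy := exp_pos (-t)
  have hxy := four_mul_exp_neg_lt_exp ht
  obtain ⟨hc₀, hc₁⟩ := abs_le.mp hc
  have hcoef : c - 2 * b + a ≤ 4 := by linarith
  simp only [warp]
  constructor
  · nlinarith [mul_le_mul_of_nonneg_right hcoef hy.le]
  · nlinarith [mul_nonneg (by linarith : 0 ≤ ε) (by linarith : 0 ≤ exp t - 2 * exp (-t)),
      mul_nonneg (mul_nonneg (by linarith : 0 ≤ ε) (sub_nonneg.mpr ha)) hy.le,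
      mul_nonneg (by linarith : 0 ≤ c + ε) hy.le, mul_nonpos_of_nonpos_of_nonneg hb₁ hy.le]

theorem neg_div_mem_Ico_of_pos_of_le_mul {u v k : ℝ} (hu : 0 < u) (huv : u ≤ k * v) (hk : 0 < k) :
    -u / v ∈ Set.Ico (-k) 0 := by
  have hv : 0 < v := pos_of_mul_pos_right (hu.trans_le huv) hk.le
  refine ⟨?_, div_neg_of_neg_of_pos (neg_neg_of_pos hu) hv⟩
  rw [neg_div, neg_le_neg_iff, div_le_iff₀ hv]
  exact huv

/-- For `0 < ε ≤ 1` and a smooth nonincreasing cutoff `φ` with values in `[0,1]`,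
`|φ'| ≤ ε`, `|φ''| ≤ ε` and `φ ≡ 1` on `(-∞, 1]`, the warping function
`s(t) = (e^t - φ(t)e^{-t})/2` satisfies `0 < s''(t) ≤ (1+ε)s(t)` for all `t > 0`;
equivalently `-s''(t)/s(t) ∈ [-1-ε, 0)`. -/
theorem stmt_3 (ε : ℝ) (hε0 : 0 < ε) (hε1 : ε ≤ 1)
    (φ : ℝ → ℝ) (hφ : ContDiff ℝ (⊤ : ℕ∞) φ)
    (hφ01 : ∀ t, 0 ≤ φ t ∧ φ t ≤ 1)
    (hφ'le : ∀ t, deriv φ t ≤ 0)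
    (hφ'abs : ∀ t, |deriv φ t| ≤ ε)
    (hφ''abs : ∀ t, |deriv (deriv φ) t| ≤ ε)
    (hφ1 : ∀ t ≤ (1 : ℝ), φ t = 1)
    (s : ℝ → ℝ)
    (hs : ∀ t, s t = (Real.exp t - φ t * Real.exp (-t)) / 2) :
    ∀ t > (0 : ℝ), (0 < deriv (deriv s) t ∧ deriv (deriv s) t ≤ (1 + ε) * s t) ∧
      -(deriv (deriv s) t) / s t ∈ Set.Ico (-1 - ε) 0 := by
  obtain rfl : s = warp φ := funext hs
  intro t ht
  have hbounds : 0 < deriv (deriv (warp φ)) t ∧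
      deriv (deriv (warp φ)) t ≤ (1 + ε) * warp φ t := by
    rcases lt_or_ge t 1 with ht₁ | ht₁
    · have hflat : φ =ᶠ[𝓝 t] fun _ => 1 :=
        eventually_of_mem (Iio_mem_nhds ht₁) fun x hx => hφ1 x (le_of_lt hx)
      rw [deriv_deriv_warp_of_eventuallyEq_one hflat, (warp_eventuallyEq_sinh hflat).eq_of_nhds]
      have hsinh := sinh_pos_iff.mpr ht
      exact ⟨hsinh, by nlinarith⟩
    · rw [deriv_deriv_warp (hφ.differentiable (by simp))
        ((contDiff_infty_iff_deriv.mp hφ).2.differentiable (by simp))]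
      exact warp_bounds_of_one_le ht₁ (hφ01 t).2 (abs_le.mp (hφ'abs t)).1 (hφ'le t)
        (hφ''abs t) hε1
  refine ⟨hbounds, ?_⟩
  rw [← neg_add']
  exact neg_div_mem_Ico_of_pos_of_le_mul hbounds.1 hbounds.2 (by linarith)
end

section
/- For every ε with 0 < ε ≤ 1 there exist a real number t₀ > 1 and a smooth function c : ℝ → ℝ such that: c is even (c(−t) = c(t) for all t); c(t) > 0 for all t; c''(t) > 0 for all t; c'(t) = c(t) for all t ≥ t₀; and for all t one has c''(t) ≤ (1 + ε)·c(t) and c'(t)² ≤ c(t)². -/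
/-!
Write `c = exp h` with `h' = φ`, where `φ` is an odd smooth step rising from `-1` to `1` across
`[-t₀, t₀]`. Then `c' = c φ` and `c'' = c (φ² + φ')`. Since `|φ| ≤ 1` and `φ' = O(1 / t₀)`, both
inequalities hold once `t₀` is large; `φ² + φ' > 0` because `φ' > 0` on `(-t₀, t₀)` and `φ² = 1`
outside; `φ = 1` beyond `t₀` gives `c' = c`; and oddness of `φ` makes `h`, hence `c`, even.
-/

open Real Set Filter Topology
open scoped ContDiff

theorem hasDerivAt_expNegInvGlue {x : ℝ} (hx : 0 < x) :
    HasDerivAt expNegInvGlue (expNegInvGlue x / x ^ 2) x := by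
  have hexp : HasDerivAt (fun y => exp (-y⁻¹)) (exp (-x⁻¹) / x ^ 2) x := by
    simpa [div_eq_mul_inv] using (hasDerivAt_inv hx.ne').neg.exp
  have hglue : expNegInvGlue =ᶠ[𝓝 x] fun y => exp (-y⁻¹) := by
    filter_upwards [Ioi_mem_nhds hx] with y hy
    simp [expNegInvGlue, not_le.2 (mem_Ioi.1 hy)]
  rw [hglue.eq_of_nhds]
  exact hexp.congr_of_eventuallyEq hglue

namespace Real.smoothTransition

theorem one_sub (x : ℝ) : smoothTransition (1 - x) = 1 - smoothTransition x := by
  have hden := pos_denom x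
  rw [smoothTransition, smoothTransition, sub_sub_cancel, add_comm, eq_sub_iff_add_eq,
    ← add_div, add_comm, div_self hden.ne']

theorem deriv_pos {x : ℝ} (hx₀ : 0 < x) (hx₁ : x < 1) : 0 < deriv smoothTransition x := by
  have hg := hasDerivAt_expNegInvGlue hx₀
  have hx₁' : 0 < 1 - x := sub_pos.2 hx₁
  have hg₁ := (hasDerivAt_expNegInvGlue hx₁').comp x ((hasDerivAt_id x).const_sub 1)
  have hσ : HasDerivAt smoothTransition _ x := hg.div (hg.add hg₁) (pos_denom x).ne'
  rw [hσ.deriv]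
  have ha := expNegInvGlue.pos_of_pos hx₀
  have hb := expNegInvGlue.pos_of_pos hx₁'
  refine div_pos ?_ (by positivity)
  convert add_pos (mul_pos (div_pos ha (pow_pos hx₀ 2)) hb)
    (mul_pos ha (div_pos hb (pow_pos hx₁' 2))) using 1
  ring

theorem exists_deriv_le : ∃ K, ∀ x, deriv smoothTransition x ≤ K := by
  have hsupp : HasCompactSupport (deriv smoothTransition) := by
    refine HasCompactSupport.intro (isCompact_Icc (a := 0) (b := 1)) fun x hx => ?_
    rcases not_and_or.1 hx with hx | hx
    · have : smoothTransition =ᶠ[𝓝 x] fun _ => 0 := by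
        filter_upwards [Iio_mem_nhds (not_le.1 hx)] with y hy
        exact zero_of_nonpos (le_of_lt hy)
      rw [this.deriv_eq, deriv_const]
    · have : smoothTransition =ᶠ[𝓝 x] fun _ => 1 := by
        filter_upwards [Ioi_mem_nhds (not_le.1 hx)] with y hy
        exact one_of_one_le (le_of_lt hy)
      rw [this.deriv_eq, deriv_const]
  have hcont : Continuous (deriv smoothTransition) :=
    (smoothTransition.contDiff (n := 1)).continuous_deriv le_rfl
  obtain ⟨K, hK⟩ := hcont.bounded_above_of_compact_support hsupp
  exact ⟨K, fun x => (le_abs_self _).trans (hK x)⟩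

end Real.smoothTransition

noncomputable def oddStep (L t : ℝ) : ℝ :=
  2 * smoothTransition ((1 + t / L) / 2) - 1

section oddStep

variable {L : ℝ}

theorem oddStep_neg (L t : ℝ) : oddStep L (-t) = -oddStep L t := by
  rw [oddStep, oddStep, show (1 + -t / L) / 2 = 1 - (1 + t / L) / 2 by ring,
    smoothTransition.one_sub]
  ring

theorem contDiff_oddStep : ContDiff ℝ ∞ (oddStep L) := by
  unfold oddStep
  fun_prop

theorem oddStep_sq_le_one (L t : ℝ) : oddStep L t ^ 2 ≤ 1 := by
  have h₀ := smoothTransition.nonneg ((1 + t / L) / 2)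
  have h₁ := smoothTransition.le_one ((1 + t / L) / 2)
  rw [oddStep, sq_le_one_iff_abs_le_one, abs_le]
  constructor <;> linarith

theorem oddStep_of_le (hL : 0 < L) {t : ℝ} (ht : L ≤ t) : oddStep L t = 1 := by
  have : 1 ≤ t / L := (one_le_div hL).2 ht
  rw [oddStep, smoothTransition.one_of_one_le (by linarith)]
  norm_num

theorem hasDerivAt_oddStep (L t : ℝ) :
    HasDerivAt (oddStep L) (deriv smoothTransition ((1 + t / L) / 2) / L) t := by
  have hσ := (smoothTransition.contDiff (n := 1)).differentiable one_ne_zero ((1 + t / L) / 2)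
  have hu : HasDerivAt (fun s => (1 + s / L) / 2) (1 / L / 2) t :=
    (((hasDerivAt_id t).div_const L).const_add 1).div_const 2
  refine (((hσ.hasDerivAt.comp t hu).const_mul 2).sub_const 1).congr_deriv ?_
  ring

theorem deriv_oddStep_nonneg (hL : 0 ≤ L) (t : ℝ) : 0 ≤ deriv (oddStep L) t := by
  rw [(hasDerivAt_oddStep L t).deriv]
  exact div_nonneg smoothTransition.monotone.deriv_nonneg hL

theorem deriv_oddStep_le (hL : 0 < L) {K : ℝ} (hK : ∀ x, deriv smoothTransition x ≤ K)
    (t : ℝ) : deriv (oddStep L) t ≤ K / L := by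
  rw [(hasDerivAt_oddStep L t).deriv]
  exact div_le_div_of_nonneg_right (hK _) hL.le

theorem oddStep_sq_add_deriv_pos (hL : 0 < L) (t : ℝ) :
    0 < oddStep L t ^ 2 + deriv (oddStep L) t := by
  rcases lt_or_ge t L with htL | htL
  · rcases lt_or_ge (-L) t with hLt | hLt
    · have hpos : 0 < deriv (oddStep L) t := by
        rw [(hasDerivAt_oddStep L t).deriv]
        refine div_pos (smoothTransition.deriv_pos ?_ ?_) hL
        · have : -1 < t / L := by rwa [lt_div_iff₀ hL, neg_one_mul]
          linarith
        · have : t / L < 1 := by rwa [div_lt_one hL]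
          linarith
      nlinarith [sq_nonneg (oddStep L t)]
    · rw [← neg_neg t, oddStep_neg, oddStep_of_le hL (le_neg.1 hLt)]
      nlinarith [deriv_oddStep_nonneg hL.le (-(-t))]
  · rw [oddStep_of_le hL htL]
    nlinarith [deriv_oddStep_nonneg hL.le t]

end oddStep

noncomputable def expPrimitive (φ : ℝ → ℝ) (t : ℝ) : ℝ :=
  exp (∫ s in (0 : ℝ)..t, φ s)

section expPrimitive

variable {φ : ℝ → ℝ}

theorem expPrimitive_pos (φ : ℝ → ℝ) (t : ℝ) : 0 < expPrimitive φ t :=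
  exp_pos _

theorem expPrimitive_neg (hφ : ∀ t, φ (-t) = -φ t) (t : ℝ) :
    expPrimitive φ (-t) = expPrimitive φ t := by
  have h : (∫ s in (0 : ℝ)..t, φ (-s)) = ∫ s in -t..(-0 : ℝ), φ s :=
    intervalIntegral.integral_comp_neg φ
  simp only [hφ, intervalIntegral.integral_neg, neg_zero] at h
  rw [expPrimitive, expPrimitive, intervalIntegral.integral_symm, ← h, neg_neg]

theorem hasDerivAt_expPrimitive (hφ : Continuous φ) (t : ℝ) :
    HasDerivAt (expPrimitive φ) (expPrimitive φ t * φ t) t :=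
  (hφ.integral_hasStrictDerivAt 0 t).hasDerivAt.exp

theorem deriv_expPrimitive (hφ : Continuous φ) :
    deriv (expPrimitive φ) = fun t => expPrimitive φ t * φ t :=
  funext fun t => (hasDerivAt_expPrimitive hφ t).deriv

theorem deriv_deriv_expPrimitive (hφ : Differentiable ℝ φ) (t : ℝ) :
    deriv (deriv (expPrimitive φ)) t = expPrimitive φ t * (φ t ^ 2 + deriv φ t) := by
  rw [deriv_expPrimitive hφ.continuous,
    ((hasDerivAt_expPrimitive hφ.continuous t).fun_mul (hφ t).hasDerivAt).deriv]
  ring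

theorem contDiff_expPrimitive (hφ : ContDiff ℝ ∞ φ) : ContDiff ℝ ∞ (expPrimitive φ) := by
  have hprim : ContDiff ℝ ∞ fun t => ∫ s in (0 : ℝ)..t, φ s := by
    refine contDiff_infty_iff_deriv.2
      ⟨fun t => (hφ.continuous.integral_hasStrictDerivAt 0 t).hasDerivAt.differentiableAt, ?_⟩
    rwa [funext (Continuous.deriv_integral φ hφ.continuous 0)]
  exact contDiff_exp.comp hprim

end expPrimitive

/-- Analytic lemma of the doubling construction: for every `0 < ε ≤ 1` there are `t₀ > 1`
and a smooth, even, positive, strictly convex function `c : ℝ → ℝ` with `c'(t) = c(t)` for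
`t ≥ t₀`, satisfying `c''(t) ≤ (1+ε)·c(t)` and `c'(t)² ≤ c(t)²` for all `t`. -/
theorem stmt_15 : ∀ ε : ℝ, 0 < ε → ε ≤ 1 →
    ∃ t₀ : ℝ, 1 < t₀ ∧ ∃ c : ℝ → ℝ, ContDiff ℝ (⊤ : ℕ∞) c ∧
      (∀ t, c (-t) = c t) ∧
      (∀ t, 0 < c t) ∧
      (∀ t, 0 < deriv (deriv c) t) ∧
      (∀ t ≥ t₀, deriv c t = c t) ∧
      (∀ t, deriv (deriv c) t ≤ (1 + ε) * c t ∧ (deriv c t) ^ 2 ≤ (c t) ^ 2) := by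
  intro ε hε _
  obtain ⟨K, hK⟩ := smoothTransition.exists_deriv_le
  set t₀ := max 2 (K / ε)
  have ht₀ : 1 < t₀ := lt_max_of_lt_left one_lt_two
  have ht₀pos : 0 < t₀ := one_pos.trans ht₀
  have hKε : K / t₀ ≤ ε :=
    div_le_of_le_mul₀ ht₀pos.le hε.le ((div_le_iff₀' hε).1 (le_max_right _ _))
  have hφ : Differentiable ℝ (oddStep t₀) := contDiff_oddStep.differentiable (by simp)
  refine ⟨t₀, ht₀, expPrimitive (oddStep t₀), contDiff_expPrimitive contDiff_oddStep,
    expPrimitive_neg (oddStep_neg t₀), expPrimitive_pos _, fun t => ?_, fun t ht => ?_,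
    fun t => ⟨?_, ?_⟩⟩
  · rw [deriv_deriv_expPrimitive hφ]
    exact mul_pos (expPrimitive_pos _ t) (oddStep_sq_add_deriv_pos ht₀pos t)
  · rw [(hasDerivAt_expPrimitive hφ.continuous t).deriv, oddStep_of_le ht₀pos ht, mul_one]
  · rw [deriv_deriv_expPrimitive hφ, mul_comm (1 + ε)]
    exact mul_le_mul_of_nonneg_left
      (add_le_add (oddStep_sq_le_one t₀ t) ((deriv_oddStep_le ht₀pos hK t).trans hKε))
      (expPrimitive_pos _ t).le
  · rw [(hasDerivAt_expPrimitive hφ.continuous t).deriv, mul_pow]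
    exact mul_le_of_le_one_right (sq_nonneg _) (oddStep_sq_le_one t₀ t)
end
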